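/- Let X1 and X2 be positive random variables such that P(Xi > x) ∼ g_i(x)·exp(−L_i·x^{p_i}) as x → ∞ (i = 1,2), where L_i, p_i > 0 and each g_i is positive and regularly varying at infinity with index α_i ∈ ℝ, and set w_x = x^{p1/(p1+p2)}. Then for any β1, β2 ∈ ℝ there exist constants 0 < a1 < a2 such that, as x → ∞, both x^{β2}·P(X1 > x/(a1·w_x)) = o(x^{β1}·P(X1 > x/w_x)·P(X2 > w_x)) and x^{β2}·P(X2 > a2·w_x) = o(x^{β1}·P(X1 > x/w_x)·P(X2 > w_x)). -/

import Mathlib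

open MeasureTheory Filter Set Real

noncomputable section

/-- `f(x) ∼ g(x)` as `x → ∞`. -/
def IsAsymp (f g : ℝ → ℝ) : Prop :=
  Filter.Tendsto (fun x => f x / g x) Filter.atTop (nhds 1)

/-- `f(x) = o(g(x))` as `x → ∞`, defined as the ratio tending to `0`. -/
def IsSmallo (f g : ℝ → ℝ) : Prop :=
  Filter.Tendsto (fun x => f x / g x) Filter.atTop (nhds 0)

/-- `g` is regularly varying at infinity with index `α`. -/
def IsRegVary (g : ℝ → ℝ) (α : ℝ) : Prop :=
  ∀ l : ℝ, 0 < l →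
    Filter.Tendsto (fun x => g (l * x) / g x) Filter.atTop (nhds (l ^ α))


/-! Both tails are of order `exp (-L_i x ^ q)` with `q = p1 p2 / (p1 + p2)` at the balance points
`x / w_x = x ^ (p2 / (p1 + p2))` and `w_x`. By regular variation, moving the argument of the
first tail by a factor `c > 1` costs a factor `exp (-L1 (c ^ p1 - 1) x ^ q)`, while the second
tail is at least `exp (-K x ^ q)` for some `K`. Choosing `c` with `L1 (c ^ p1 - 1) > K` makes the
ratio decay like `exp (-x ^ q)`, which also absorbs the powers `x ^ β`; the second claim is
symmetric. The crude bound `exp (-K y ^ p) ≤ P (X > y)` comes from iterating `g (2 y) ≥ r g y`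
along the points `2 ^ n y₀` and using that the tail is monotone in between: the accumulated
factor `r ^ n` is only polynomial in `y`. -/

open Topology

section Ratio

variable {α : Type*} {l : Filter α} {f g : α → ℝ} {a b : ℝ}

theorem eventually_le_mul_of_tendsto_div (hfg : Tendsto (fun x => f x / g x) l (𝓝 a))
    (hg : ∀ᶠ x in l, 0 < g x) (hab : a < b) : ∀ᶠ x in l, f x ≤ b * g x := by
  filter_upwards [hfg.eventually (eventually_le_nhds hab), hg] with x hx hgx
  exact (div_le_iff₀ hgx).mp hx

theorem eventually_mul_le_of_tendsto_div (hfg : Tendsto (fun x => f x / g x) l (𝓝 a))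
    (hg : ∀ᶠ x in l, 0 < g x) (hba : b < a) : ∀ᶠ x in l, b * g x ≤ f x := by
  filter_upwards [hfg.eventually (eventually_ge_nhds hba), hg] with x hx hgx
  exact (le_div_iff₀ hgx).mp hx

theorem eventually_pos_of_tendsto_div (hfg : Tendsto (fun x => f x / g x) l (𝓝 a))
    (hg : ∀ᶠ x in l, 0 < g x) (ha : 0 < a) : ∀ᶠ x in l, 0 < f x := by
  filter_upwards [hfg.eventually (eventually_gt_nhds ha), hg] with x hx hgx
  exact (div_pos_iff_of_pos_right hgx).mp hx

end Ratio

theorem IsSmallo.congr' {f₁ f₂ g₁ g₂ : ℝ → ℝ} (h : IsSmallo f₁ g₁) (hf : f₁ =ᶠ[atTop] f₂)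
    (hg : g₁ =ᶠ[atTop] g₂) : IsSmallo f₂ g₂ :=
  Tendsto.congr' (hf.div hg) h

theorem isSmallo_of_le_mul {N D h : ℝ → ℝ} (hN : ∀ᶠ x in atTop, 0 ≤ N x)
    (hD : ∀ᶠ x in atTop, 0 < D x) (hle : ∀ᶠ x in atTop, N x ≤ h x * D x)
    (hh : Tendsto h atTop (𝓝 0)) : IsSmallo N D := by
  refine squeeze_zero' ?_ ?_ hh
  · filter_upwards [hN, hD] with x hNx hDx
    positivity
  · filter_upwards [hD, hle] with x hDx hx
    exact (div_le_iff₀ hDx).mpr hx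

theorem tendsto_rpow_mul_exp_neg_rpow_atTop_nhds_zero (s : ℝ) {q : ℝ} (hq : 0 < q) :
    Tendsto (fun x : ℝ => x ^ s * exp (-x ^ q)) atTop (𝓝 0) := by
  refine ((tendsto_rpow_mul_exp_neg_mul_atTop_nhds_zero (s / q) 1 one_pos).comp
    (tendsto_rpow_atTop hq)).congr' ?_
  filter_upwards [eventually_gt_atTop 0] with x hx
  rw [Function.comp_apply, ← rpow_mul hx.le, mul_div_cancel₀ s hq.ne', neg_one_mul]

theorem eventually_exp_neg_le_rpow_mul_exp_neg {c : ℝ} (hc : 0 < c) (σ L : ℝ) {p : ℝ}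
    (hp : 0 < p) : ∀ᶠ u in atTop, exp (-((L + 1) * u ^ p)) ≤ c * u ^ σ * exp (-(L * u ^ p)) := by
  filter_upwards [(tendsto_rpow_mul_exp_neg_rpow_atTop_nhds_zero (-σ) hp).eventually
    (eventually_le_nhds hc), eventually_gt_atTop 0] with u hu hu0
  have hexp : exp (-u ^ p) ≤ c * u ^ σ := by
    rw [rpow_neg hu0.le] at hu
    exact (inv_mul_le_iff₀ (rpow_pos_of_pos hu0 σ)).mp hu |>.trans_eq (mul_comm _ _)
  calc exp (-((L + 1) * u ^ p)) = exp (-u ^ p) * exp (-(L * u ^ p)) := by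
        rw [← exp_add]; ring_nf
    _ ≤ c * u ^ σ * exp (-(L * u ^ p)) := by gcongr

theorem pow_mul_le_of_le_mul {g : ℝ → ℝ} {l r y₀ : ℝ} (hl : 1 ≤ l) (hr : 0 ≤ r) (hy₀ : 0 ≤ y₀)
    (hg : ∀ y ≥ y₀, r * g y ≤ g (l * y)) (n : ℕ) : r ^ n * g y₀ ≤ g (l ^ n * y₀) := by
  induction n with
  | zero => simp
  | succ n ih =>
    calc r ^ (n + 1) * g y₀ = r * (r ^ n * g y₀) := by ring
      _ ≤ r * g (l ^ n * y₀) := by gcongr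
      _ ≤ g (l * (l ^ n * y₀)) := hg _ (le_mul_of_one_le_left hy₀ (one_le_pow₀ hl))
      _ = g (l ^ (n + 1) * y₀) := by ring_nf

theorem exists_pow_mul_mem_Icc {l y₀ y : ℝ} (hl : 1 < l) (hy₀ : 0 < y₀) (hy : y₀ ≤ y) :
    ∃ n : ℕ, y ≤ l ^ n * y₀ ∧ l ^ n * y₀ ≤ l * y := by
  obtain ⟨n, hle, hlt⟩ := exists_nat_pow_near ((one_le_div hy₀).mpr hy) hl
  refine ⟨n + 1, ((div_lt_iff₀ hy₀).mp hlt).le, ?_⟩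
  rw [pow_succ', mul_assoc]
  exact mul_le_mul_of_nonneg_left ((le_div_iff₀ hy₀).mp hle) (by linarith)

theorem IsRegVary.exists_rpow_mul_le {g : ℝ → ℝ} {α : ℝ} (hrv : IsRegVary g α)
    (hg : ∀ y, 0 < g y) :
    ∃ σ : ℝ, σ ≤ 0 ∧ ∀ᶠ y₀ in atTop, ∀ n : ℕ, ((2 : ℝ) ^ n) ^ σ * g y₀ ≤ g (2 ^ n * y₀) := by
  set r := min ((2 : ℝ) ^ α / 2) 1
  have hr0 : 0 < r := lt_min (by positivity) one_pos
  have hr2 : r < 2 ^ α := (min_le_left _ _).trans_lt (half_lt_self (by positivity))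
  obtain ⟨Y, hY⟩ := eventually_atTop.mp
    (eventually_mul_le_of_tendsto_div (hrv 2 two_pos) (.of_forall hg) hr2)
  refine ⟨logb 2 r, logb_nonpos one_lt_two hr0.le (min_le_right _ _), ?_⟩
  filter_upwards [eventually_ge_atTop (max Y 0)] with y₀ hy₀ n
  rw [← rpow_pow_comm zero_le_two, rpow_logb two_pos (by norm_num) hr0]
  exact pow_mul_le_of_le_mul one_le_two hr0.le ((le_max_right _ _).trans hy₀)
    (fun y hy => hY y ((le_max_left _ _).trans (hy₀.trans hy))) n

theorem Antitone.exists_exp_neg_le {T g : ℝ → ℝ} {L p α : ℝ} (hT : Antitone T) (hL : 0 ≤ L)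
    (hp : 0 < p)
    (hg : ∀ y, 0 < g y) (hrv : IsRegVary g α)
    (htail : IsAsymp T fun y => g y * exp (-(L * y ^ p))) :
    ∃ K, 0 < K ∧ ∀ᶠ y in atTop, exp (-(K * y ^ p)) ≤ T y := by
  obtain ⟨σ, hσ, hgeom⟩ := hrv.exists_rpow_mul_le hg
  have hlow := eventually_mul_le_of_tendsto_div htail (.of_forall fun y => by
    have := hg y; positivity) one_half_lt_one
  obtain ⟨y₀, hy₀, hgeom₀, hlow₀⟩ : ∃ y₀, 0 < y₀ ∧ (∀ n : ℕ, ((2 : ℝ) ^ n) ^ σ * g y₀ ≤ g (2 ^ n * y₀))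
      ∧ ∀ y ≥ y₀, 1 / 2 * (g y * exp (-(L * y ^ p))) ≤ T y := by
    obtain ⟨Y, hY⟩ := eventually_atTop.mp hlow
    obtain ⟨y₀, hy₀, hgy₀⟩ := ((eventually_ge_atTop Y).and ((eventually_gt_atTop 0).and hgeom)).exists
    exact ⟨y₀, hgy₀.1, hgy₀.2, fun y hy => hY y (hy₀.trans hy)⟩
  set c := g y₀ / y₀ ^ σ
  have hc : 0 < c := div_pos (hg y₀) (rpow_pos_of_pos hy₀ σ)
  have hbound : ∀ y ≥ y₀, c / 2 * (2 * y) ^ σ * exp (-(L * (2 * y) ^ p)) ≤ T y := by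
    intro y hy
    obtain ⟨n, hyz, hz2y⟩ := exists_pow_mul_mem_Icc one_lt_two hy₀ hy
    have hz : 0 < (2 : ℝ) ^ n * y₀ := by positivity
    calc c / 2 * (2 * y) ^ σ * exp (-(L * (2 * y) ^ p))
        ≤ c / 2 * (2 ^ n * y₀) ^ σ * exp (-(L * (2 ^ n * y₀) ^ p)) := by
          gcongr ?_ * ?_ * ?_
          · exact rpow_le_rpow_of_nonpos hz hz2y hσ
          · exact exp_le_exp.mpr (by gcongr)
      _ = 1 / 2 * ((2 ^ n : ℝ) ^ σ * g y₀ * exp (-(L * (2 ^ n * y₀) ^ p))) := by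
          rw [mul_rpow (by positivity) hy₀.le]
          field_simp
          exact div_mul_cancel₀ _ (rpow_pos_of_pos hy₀ σ).ne'
      _ ≤ 1 / 2 * (g (2 ^ n * y₀) * exp (-(L * (2 ^ n * y₀) ^ p))) := by
          gcongr
          exact hgeom₀ n
      _ ≤ T (2 ^ n * y₀) := hlow₀ _ (hy.trans hyz)
      _ ≤ T y := hT hyz
  refine ⟨(L + 1) * 2 ^ p, by positivity, ?_⟩
  have h2y : Tendsto (fun y : ℝ => 2 * y) atTop atTop := tendsto_id.const_mul_atTop two_pos
  filter_upwards [h2y.eventually (eventually_exp_neg_le_rpow_mul_exp_neg (half_pos hc) σ L hp),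
    eventually_ge_atTop y₀] with y hexp hy
  calc exp (-((L + 1) * 2 ^ p * y ^ p)) = exp (-((L + 1) * (2 * y) ^ p)) := by
        rw [mul_rpow zero_le_two (hy₀.le.trans hy), mul_assoc]
    _ ≤ c / 2 * (2 * y) ^ σ * exp (-(L * (2 * y) ^ p)) := hexp
    _ ≤ T y := hbound y hy

theorem exists_tail_ratio_le {T g : ℝ → ℝ} {L p α M : ℝ} (hL : 0 < L) (hp : 0 < p) (hM : 0 < M)
    (hg : ∀ y, 0 < g y) (hrv : IsRegVary g α)
    (htail : IsAsymp T fun y => g y * exp (-(L * y ^ p))) :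
    ∃ c, 1 < c ∧ ∃ C, 0 < C ∧ ∀ᶠ y in atTop, T (c * y) ≤ C * exp (-(M * y ^ p)) * T y := by
  set c := (1 + M / L) ^ p⁻¹
  have hc : 1 < c := one_lt_rpow (by linarith [div_pos hM hL]) (inv_pos.mpr hp)
  have hc0 : 0 < c := one_pos.trans hc
  have hLc : L * c ^ p = L + M := by
    rw [rpow_inv_rpow (by positivity) hp.ne']
    field_simp
  have hF : ∀ᶠ y in atTop, 0 < g y * exp (-(L * y ^ p)) :=
    .of_forall fun y => mul_pos (hg y) (exp_pos _)
  have hup := eventually_le_mul_of_tendsto_div htail hF one_lt_two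
  have hlow := eventually_mul_le_of_tendsto_div htail hF one_half_lt_one
  have hgc := eventually_le_mul_of_tendsto_div (hrv c hc0) (.of_forall hg) (lt_add_one (c ^ α))
  have hcy : Tendsto (fun y : ℝ => c * y) atTop atTop := tendsto_id.const_mul_atTop hc0
  refine ⟨c, hc, 4 * (c ^ α + 1), by positivity, ?_⟩
  filter_upwards [hcy.eventually hup, hlow, hgc, eventually_ge_atTop 0] with y hupy hlowy hgcy hy
  have hexp : exp (-(L * (c * y) ^ p)) = exp (-(M * y ^ p)) * exp (-(L * y ^ p)) := by
    rw [mul_rpow hc0.le hy, ← mul_assoc, hLc, ← exp_add]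
    ring_nf
  calc T (c * y) ≤ 2 * (g (c * y) * exp (-(L * (c * y) ^ p))) := hupy
    _ ≤ 2 * ((c ^ α + 1) * g y * (exp (-(M * y ^ p)) * exp (-(L * y ^ p)))) := by
        rw [hexp]
        gcongr
    _ = 4 * (c ^ α + 1) * exp (-(M * y ^ p)) * (1 / 2 * (g y * exp (-(L * y ^ p)))) := by ring
    _ ≤ 4 * (c ^ α + 1) * exp (-(M * y ^ p)) * T y := by gcongr

theorem exists_isSmallo_scaled_tail {T T' g : ℝ → ℝ} {L K p p' α s s' : ℝ} (hL : 0 < L)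
    (hp : 0 < p) (hK : 0 < K) (hs : 0 < s) (hs' : 0 < s') (hsp : s * p = s' * p')
    (hg : ∀ y, 0 < g y) (hrv : IsRegVary g α)
    (htail : IsAsymp T fun y => g y * exp (-(L * y ^ p)))
    (hT' : ∀ᶠ y in atTop, exp (-(K * y ^ p')) ≤ T' y) (β₁ β₂ : ℝ) :
    ∃ c, 1 < c ∧ IsSmallo (fun x => x ^ β₂ * T (c * x ^ s))
      (fun x => x ^ β₁ * T (x ^ s) * T' (x ^ s')) := by
  obtain ⟨c, hc, C, hC, hratio⟩ := exists_tail_ratio_le hL hp (by linarith : 0 < K + 1) hg hrv htail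
  refine ⟨c, hc, ?_⟩
  have hTpos : ∀ᶠ y in atTop, 0 < T y :=
    eventually_pos_of_tendsto_div htail (.of_forall fun y => mul_pos (hg y) (exp_pos _)) one_pos
  have hxs : Tendsto (fun x : ℝ => x ^ s) atTop atTop := tendsto_rpow_atTop hs
  have hcxs : Tendsto (fun x : ℝ => c * x ^ s) atTop atTop :=
    hxs.const_mul_atTop (one_pos.trans hc)
  have hxs' : Tendsto (fun x : ℝ => x ^ s') atTop atTop := tendsto_rpow_atTop hs'
  have hq : 0 < s * p := mul_pos hs hp
  refine isSmallo_of_le_mul (h := fun x => C * (x ^ (β₂ - β₁) * exp (-x ^ (s * p)))) ?_ ?_ ?_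
    (by simpa using (tendsto_rpow_mul_exp_neg_rpow_atTop_nhds_zero (β₂ - β₁) hq).const_mul C)
  · filter_upwards [hcxs.eventually hTpos, eventually_ge_atTop 0] with x hT hx
    positivity
  · filter_upwards [hxs.eventually hTpos, hxs'.eventually hT', eventually_gt_atTop 0]
      with x hT hT' hx
    have := (exp_pos _).trans_le hT'
    positivity
  · filter_upwards [hxs.eventually hratio, hxs'.eventually hT', hxs.eventually hTpos,
      eventually_gt_atTop 0] with x hratio hT' hT hx
    rw [← rpow_mul hx.le] at hratio
    rw [← rpow_mul hx.le, ← hsp] at hT'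
    calc x ^ β₂ * T (c * x ^ s) ≤ x ^ β₂ * (C * exp (-((K + 1) * x ^ (s * p))) * T (x ^ s)) := by
          gcongr
      _ = C * (x ^ (β₂ - β₁) * exp (-x ^ (s * p))) *
            (x ^ β₁ * T (x ^ s) * exp (-(K * x ^ (s * p)))) := by
          have hsplit : exp (-((K + 1) * x ^ (s * p))) =
              exp (-x ^ (s * p)) * exp (-(K * x ^ (s * p))) := by
            rw [← exp_add]; ring_nf
          rw [hsplit, rpow_sub hx]
          field_simp
      _ ≤ C * (x ^ (β₂ - β₁) * exp (-x ^ (s * p))) * (x ^ β₁ * T (x ^ s) * T' (x ^ s')) := by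
          gcongr

theorem antitone_toReal_measure_lt {Ω : Type*} [MeasurableSpace Ω] (μ : Measure Ω)
    [IsFiniteMeasure μ] (X : Ω → ℝ) : Antitone fun y => (μ {ω | y < X ω}).toReal :=
  fun _ _ hab => ENNReal.toReal_mono (measure_ne_top μ _) (measure_mono fun _ h => hab.trans_lt h)

theorem negligible_ranges_in_product_tail_general
    {Ω : Type*} [MeasurableSpace Ω] (P : Measure Ω) [IsProbabilityMeasure P]
    (X1 X2 : Ω → ℝ)
    (g1 g2 : ℝ → ℝ) (L1 L2 p1 p2 α1 α2 : ℝ)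
    (hL1 : 0 < L1) (hL2 : 0 < L2) (hp1 : 0 < p1) (hp2 : 0 < p2)
    (hg1pos : ∀ x, 0 < g1 x) (hg2pos : ∀ x, 0 < g2 x)
    (hg1rv : IsRegVary g1 α1) (hg2rv : IsRegVary g2 α2)
    (htail1 : IsAsymp (fun x => (P {ω | x < X1 ω}).toReal)
      (fun x => g1 x * Real.exp (-(L1 * x ^ p1))))
    (htail2 : IsAsymp (fun x => (P {ω | x < X2 ω}).toReal)
      (fun x => g2 x * Real.exp (-(L2 * x ^ p2))))
    (β1 β2 : ℝ) :
    ∃ a1 a2 : ℝ, 0 < a1 ∧ a1 < a2 ∧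
      IsSmallo
        (fun x => x ^ β2 *
          (P {ω | x / (a1 * x ^ (p1 / (p1 + p2))) < X1 ω}).toReal)
        (fun x => x ^ β1 *
          (P {ω | x / x ^ (p1 / (p1 + p2)) < X1 ω}).toReal *
          (P {ω | x ^ (p1 / (p1 + p2)) < X2 ω}).toReal) ∧
      IsSmallo
        (fun x => x ^ β2 *
          (P {ω | a2 * x ^ (p1 / (p1 + p2)) < X2 ω}).toReal)
        (fun x => x ^ β1 *
          (P {ω | x / x ^ (p1 / (p1 + p2)) < X1 ω}).toReal *
          (P {ω | x ^ (p1 / (p1 + p2)) < X2 ω}).toReal) := by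
  set s := p2 / (p1 + p2)
  set w := p1 / (p1 + p2)
  have hs : 0 < s := by positivity
  have hw : 0 < w := by positivity
  have hsp : s * p1 = w * p2 := by ring
  have hsw : s = 1 - w := by
    simp only [s, w]
    field_simp
    ring
  have hxw : ∀ᶠ x : ℝ in atTop, x / x ^ w = x ^ s := by
    filter_upwards [eventually_gt_atTop 0] with x hx
    rw [hsw, rpow_sub hx, rpow_one]
  obtain ⟨K1, hK1, hlow1⟩ :=
    (antitone_toReal_measure_lt P X1).exists_exp_neg_le hL1.le hp1 hg1pos hg1rv htail1
  obtain ⟨K2, hK2, hlow2⟩ :=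
    (antitone_toReal_measure_lt P X2).exists_exp_neg_le hL2.le hp2 hg2pos hg2rv htail2
  obtain ⟨c1, hc1, h1⟩ :=
    exists_isSmallo_scaled_tail hL1 hp1 hK2 hs hw hsp hg1pos hg1rv htail1 hlow2 β1 β2
  obtain ⟨c2, hc2, h2⟩ :=
    exists_isSmallo_scaled_tail hL2 hp2 hK1 hw hs hsp.symm hg2pos hg2rv htail2 hlow1 β1 β2
  refine ⟨c1⁻¹, c2, by positivity, (inv_lt_one_of_one_lt₀ hc1).trans hc2,
    h1.congr' ?_ ?_, h2.congr' .rfl ?_⟩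
  all_goals filter_upwards [hxw] with x hx
  · rw [div_mul_eq_div_div_swap, hx, div_inv_eq_mul, mul_comm _ c1]
  · rw [hx]
  · rw [hx]
    ring

theorem negligible_ranges_in_product_tail
    {Ω : Type*} [MeasurableSpace Ω] (P : Measure Ω) [IsProbabilityMeasure P]
    (X1 X2 : Ω → ℝ) (hX1m : Measurable X1) (hX2m : Measurable X2)
    (hX1pos : ∀ ω, 0 < X1 ω) (hX2pos : ∀ ω, 0 < X2 ω)
    (g1 g2 : ℝ → ℝ) (L1 L2 p1 p2 α1 α2 : ℝ)
    (hL1 : 0 < L1) (hL2 : 0 < L2) (hp1 : 0 < p1) (hp2 : 0 < p2)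
    (hg1pos : ∀ x, 0 < g1 x) (hg2pos : ∀ x, 0 < g2 x)
    (hg1rv : IsRegVary g1 α1) (hg2rv : IsRegVary g2 α2)
    (htail1 : IsAsymp (fun x => (P {ω | x < X1 ω}).toReal)
      (fun x => g1 x * Real.exp (-(L1 * x ^ p1))))
    (htail2 : IsAsymp (fun x => (P {ω | x < X2 ω}).toReal)
      (fun x => g2 x * Real.exp (-(L2 * x ^ p2))))
    (β1 β2 : ℝ) :
    ∃ a1 a2 : ℝ, 0 < a1 ∧ a1 < a2 ∧
      IsSmallo
        (fun x => x ^ β2 *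
          (P {ω | x / (a1 * x ^ (p1 / (p1 + p2))) < X1 ω}).toReal)
        (fun x => x ^ β1 *
          (P {ω | x / x ^ (p1 / (p1 + p2)) < X1 ω}).toReal *
          (P {ω | x ^ (p1 / (p1 + p2)) < X2 ω}).toReal) ∧
      IsSmallo
        (fun x => x ^ β2 *
          (P {ω | a2 * x ^ (p1 / (p1 + p2)) < X2 ω}).toReal)
        (fun x => x ^ β1 *
          (P {ω | x / x ^ (p1 / (p1 + p2)) < X1 ω}).toReal *
          (P {ω | x ^ (p1 / (p1 + p2)) < X2 ω}).toReal) :=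
  negligible_ranges_in_product_tail_general P X1 X2 g1 g2 L1 L2 p1 p2 α1 α2 hL1 hL2 hp1 hp2 hg1pos
    hg2pos hg1rv hg2rv htail1 htail2 β1 β2

end
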